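/- Let L : J → ℝ be a smooth Lagrangian, let X^i : ℝ^k × ℝ^n → ℝ (1 ≤ i ≤ n) be smooth (the components of a π-vertical vector field X = X^i ∂/∂q^i on E = ℝ^k × ℝ^n), and suppose there exist smooth functions g^α : ℝ^k × ℝ^n → ℝ (1 ≤ α ≤ k) such that at every point (x,q,v) ∈ J: X^i(x,q) · ∂L/∂q^i (x,q,v) + (∂X^i/∂x^α (x,q) + v^j_α ∂X^i/∂q^j (x,q)) · ∂L/∂v^i_α (x,q,v) = ∑_α [∂g^α/∂x^α (x,q) + v^i_α ∂g^α/∂q^i (x,q)] (i.e. X¹(L) = d_{T^{(0)}_α} g^α). Then the functions G^α(x,q,v) = g^α(x,q) − X^i(x,q) · ∂L/∂v^i_α (x,q,v) define a conservation law for the Euler–Lagrange equations of L. -/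

import Mathlib

open Function

noncomputable section

/-- The first jet space `J = ℝᵏ × ℝⁿ × (Fin n → Fin k → ℝ)`,
with coordinates `(xᵅ, qⁱ, vⁱ_α)`. -/
abbrev Jet (k n : ℕ) : Type :=
  (Fin k → ℝ) × (Fin n → ℝ) × (Fin n → Fin k → ℝ)

variable {k n : ℕ}

/-- Partial derivative `∂F/∂xᵅ` of a function on the jet space. -/
noncomputable def pdX (F : Jet k n → ℝ) (α : Fin k) (z : Jet k n) : ℝ :=
  deriv (fun t => F (Function.update z.1 α t, z.2.1, z.2.2)) (z.1 α)

/-- Partial derivative `∂F/∂qⁱ` of a function on the jet space. -/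
noncomputable def pdQ (F : Jet k n → ℝ) (i : Fin n) (z : Jet k n) : ℝ :=
  deriv (fun t => F (z.1, Function.update z.2.1 i t, z.2.2)) (z.2.1 i)

/-- Partial derivative `∂F/∂vⁱ_α` of a function on the jet space. -/
noncomputable def pdV (F : Jet k n → ℝ) (i : Fin n) (α : Fin k) (z : Jet k n) : ℝ :=
  deriv (fun t => F (z.1, z.2.1,
    Function.update z.2.2 i (Function.update (z.2.2 i) α t))) (z.2.2 i α)

/-- Partial derivative `∂φⁱ/∂xᵅ` of a map `φ : ℝᵏ → ℝⁿ`. -/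
noncomputable def pD (φ : (Fin k → ℝ) → (Fin n → ℝ)) (i : Fin n) (α : Fin k)
    (x : Fin k → ℝ) : ℝ :=
  deriv (fun t => φ (Function.update x α t) i) (x α)

/-- Second partial derivative `∂²φⁱ/∂xᵅ∂xᵝ` of a map `φ : ℝᵏ → ℝⁿ`. -/
noncomputable def pD2 (φ : (Fin k → ℝ) → (Fin n → ℝ)) (i : Fin n) (α β : Fin k)
    (x : Fin k → ℝ) : ℝ :=
  deriv (fun t => pD φ i β (Function.update x α t)) (x α)

/-- First prolongation `j¹φ : ℝᵏ → J` of `φ : ℝᵏ → ℝⁿ`. -/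
noncomputable def j1 (φ : (Fin k → ℝ) → (Fin n → ℝ)) (x : Fin k → ℝ) : Jet k n :=
  (x, φ x, fun i α => pD φ i α x)

/-- `φ` is a smooth solution of the Euler–Lagrange equations of the Lagrangian `L`:
`∑_α ∂/∂xᵅ[(∂L/∂vⁱ_α) ∘ j¹φ] = (∂L/∂qⁱ) ∘ j¹φ` for all `i`. -/
def IsELSolution (L : Jet k n → ℝ) (φ : (Fin k → ℝ) → (Fin n → ℝ)) : Prop :=
  ContDiff ℝ (⊤ : ℕ∞) φ ∧
  ∀ (i : Fin n) (x : Fin k → ℝ),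
    (∑ α : Fin k, deriv (fun t => pdV L i α (j1 φ (Function.update x α t))) (x α))
      = pdQ L i (j1 φ x)

/-- `G = (G¹, …, Gᵏ)` is a conservation law for the Euler–Lagrange equations of `L`:
`∑_α ∂/∂xᵅ(Gᵅ ∘ j¹φ) = 0` for every solution `φ`. -/
def IsConservationLaw (L : Jet k n → ℝ) (G : Fin k → Jet k n → ℝ) : Prop :=
  ∀ φ : (Fin k → ℝ) → (Fin n → ℝ), IsELSolution L φ →
    ∀ x : Fin k → ℝ,
      (∑ α : Fin k, deriv (fun t => G α (j1 φ (Function.update x α t))) (x α)) = 0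

/-- Partial derivative `∂f/∂xᵅ` of a function on `E = ℝᵏ × ℝⁿ`. -/
noncomputable def pdEX (f : (Fin k → ℝ) → (Fin n → ℝ) → ℝ) (α : Fin k)
    (x : Fin k → ℝ) (q : Fin n → ℝ) : ℝ :=
  deriv (fun t => f (Function.update x α t) q) (x α)

/-- Partial derivative `∂f/∂qⁱ` of a function on `E = ℝᵏ × ℝⁿ`. -/
noncomputable def pdEQ (f : (Fin k → ℝ) → (Fin n → ℝ) → ℝ) (i : Fin n)
    (x : Fin k → ℝ) (q : Fin n → ℝ) : ℝ :=
  deriv (fun t => f x (Function.update q i t)) (q i)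

/-!
Along a solution `φ`, the Leibniz rule gives
`∂_α (Xⁱ · ∂L/∂vⁱ_α ∘ j¹φ) = (d_α Xⁱ · ∂L/∂vⁱ_α) ∘ j¹φ + Xⁱ · ∂_α (∂L/∂vⁱ_α ∘ j¹φ)`, and the
Euler–Lagrange equations turn the last sum into `(Xⁱ · ∂L/∂qⁱ) ∘ j¹φ`. So the divergence of
`Xⁱ · ∂L/∂vⁱ_α` along `j¹φ` is `X¹(L) ∘ j¹φ`, that of `gᵅ` is `(d_α gᵅ) ∘ j¹φ`, and the hypothesis
`X¹(L) = d_α gᵅ` makes them cancel.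
-/

/-- The total derivative `d_{T⁽⁰⁾_α} f` of a function `f` on `E`, seen on `J`. -/
def totalDeriv (f : (Fin k → ℝ) → (Fin n → ℝ) → ℝ) (α : Fin k) (z : Jet k n) : ℝ :=
  pdEX f α z.1 z.2.1 + ∑ i : Fin n, z.2.2 i α * pdEQ f i z.1 z.2.1

theorem hasDerivAt_update_update {𝕜 ι κ : Type*} [NontriviallyNormedField 𝕜] [Fintype ι]
    [DecidableEq ι] [Fintype κ] [DecidableEq κ] (x : ι → κ → 𝕜) (i : ι) (α : κ) (t : 𝕜) :
    HasDerivAt (fun s => Function.update x i (Function.update (x i) α s))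
      (Pi.single i (Pi.single α 1)) t := by
  have h := (hasFDerivAt_update (𝕜 := 𝕜) x (i := i) _).comp_hasDerivAt t
    (hasDerivAt_update (x i) α t)
  refine h.congr_deriv ?_
  ext j β
  rcases eq_or_ne j i with rfl | hj <;> simp [*]

theorem pdV_eq_fderiv {L : Jet k n → ℝ} {z : Jet k n} (hL : DifferentiableAt ℝ L z)
    (i : Fin n) (α : Fin k) :
    pdV L i α z = fderiv ℝ L z (0, 0, Pi.single i (Pi.single α 1)) := by
  have hpath := (hasDerivAt_const (z.2.2 i α) z.1).prodMk
    ((hasDerivAt_const (z.2.2 i α) z.2.1).prodMk (hasDerivAt_update_update z.2.2 i α _))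
  exact (hL.hasFDerivAt.comp_hasDerivAt_of_eq _ hpath (by simp)).deriv

theorem hasDerivAt_comp_update {φ : (Fin k → ℝ) → (Fin n → ℝ)} {x : Fin k → ℝ}
    (hφ : DifferentiableAt ℝ φ x) (α : Fin k) :
    HasDerivAt (fun t => φ (Function.update x α t)) (fderiv ℝ φ x (Pi.single α 1)) (x α) :=
  hφ.hasFDerivAt.comp_hasDerivAt_of_eq _ (hasDerivAt_update x α _) (by simp)

theorem pD_eq_fderiv {φ : (Fin k → ℝ) → (Fin n → ℝ)} {x : Fin k → ℝ}
    (hφ : DifferentiableAt ℝ φ x) (i : Fin n) (α : Fin k) :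
    pD φ i α x = fderiv ℝ φ x (Pi.single α 1) i :=
  (hasDerivAt_pi.1 (hasDerivAt_comp_update hφ α) i).deriv

theorem pdEX_eq_fderiv {f : (Fin k → ℝ) → (Fin n → ℝ) → ℝ} {x : Fin k → ℝ} {q : Fin n → ℝ}
    (hf : DifferentiableAt ℝ (fun p : (Fin k → ℝ) × (Fin n → ℝ) => f p.1 p.2) (x, q))
    (α : Fin k) :
    pdEX f α x q = fderiv ℝ (fun p : (Fin k → ℝ) × (Fin n → ℝ) => f p.1 p.2) (x, q)
      (Pi.single α 1, 0) :=
  (hf.hasFDerivAt.comp_hasDerivAt_of_eq _ ((hasDerivAt_update x α _).prodMk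
    (hasDerivAt_const _ q)) (by simp)).deriv

theorem pdEQ_eq_fderiv {f : (Fin k → ℝ) → (Fin n → ℝ) → ℝ} {x : Fin k → ℝ} {q : Fin n → ℝ}
    (hf : DifferentiableAt ℝ (fun p : (Fin k → ℝ) × (Fin n → ℝ) => f p.1 p.2) (x, q))
    (i : Fin n) :
    pdEQ f i x q = fderiv ℝ (fun p : (Fin k → ℝ) × (Fin n → ℝ) => f p.1 p.2) (x, q)
      (0, Pi.single i 1) :=
  (hf.hasFDerivAt.comp_hasDerivAt_of_eq _ ((hasDerivAt_const _ x).prodMk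
    (hasDerivAt_update q i _)) (by simp)).deriv

theorem contDiff_pdV {m : WithTop ℕ∞} {L : Jet k n → ℝ} (hL : ContDiff ℝ (m + 1) L)
    (i : Fin n) (α : Fin k) : ContDiff ℝ m (pdV L i α) := by
  have hLd : Differentiable ℝ L := hL.differentiable (by simp)
  rw [show pdV L i α = _ from funext fun z => pdV_eq_fderiv (hLd z) i α]
  exact (hL.fderiv_right le_rfl).clm_apply contDiff_const

theorem contDiff_pD {m : WithTop ℕ∞} {φ : (Fin k → ℝ) → (Fin n → ℝ)}
    (hφ : ContDiff ℝ (m + 1) φ) (i : Fin n) (α : Fin k) : ContDiff ℝ m (pD φ i α) := by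
  have hφd : Differentiable ℝ φ := hφ.differentiable (by simp)
  rw [show pD φ i α = _ from funext fun x => pD_eq_fderiv (hφd x) i α]
  exact contDiff_pi.1 ((hφ.fderiv_right le_rfl).clm_apply contDiff_const) i

theorem contDiff_j1 {m : WithTop ℕ∞} {φ : (Fin k → ℝ) → (Fin n → ℝ)}
    (hφ : ContDiff ℝ (m + 1) φ) : ContDiff ℝ m (j1 φ) :=
  contDiff_id.prodMk ((hφ.of_le le_self_add).prodMk
    (contDiff_pi.2 fun i => contDiff_pi.2 fun α => contDiff_pD hφ i α))

theorem hasDerivAt_comp_graph {f : (Fin k → ℝ) → (Fin n → ℝ) → ℝ}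
    {φ : (Fin k → ℝ) → (Fin n → ℝ)} {x : Fin k → ℝ}
    (hf : DifferentiableAt ℝ (fun p : (Fin k → ℝ) × (Fin n → ℝ) => f p.1 p.2) (x, φ x))
    (hφ : DifferentiableAt ℝ φ x) (α : Fin k) :
    HasDerivAt (fun t => f (Function.update x α t) (φ (Function.update x α t)))
      (totalDeriv f α (j1 φ x)) (x α) := by
  have hpath := (hasDerivAt_update x α (x α)).prodMk (hasDerivAt_comp_update hφ α)
  refine (hf.hasFDerivAt.comp_hasDerivAt_of_eq _ hpath (by simp)).congr_deriv ?_
  simp only [totalDeriv, j1, pD_eq_fderiv hφ, pdEX_eq_fderiv hf, pdEQ_eq_fderiv hf]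
  generalize fderiv ℝ φ x (Pi.single α 1) = D
  have hsplit : ((Pi.single α 1, D) : (Fin k → ℝ) × (Fin n → ℝ))
      = (Pi.single α 1, 0) + ∑ i, D i • ((0 : Fin k → ℝ), (Pi.single i 1 : Fin n → ℝ)) := by
    ext1
    · simp [Prod.fst_sum]
    · simpa [Prod.snd_sum] using pi_eq_sum_univ' D
  simp only [hsplit, map_add, map_sum, map_smul, smul_eq_mul]

theorem hasDerivAt_sub_sum_mul_pdV {L : Jet k n → ℝ} (hL : ContDiff ℝ ((1 : WithTop ℕ∞) + 1) L)
    {X : Fin n → (Fin k → ℝ) → (Fin n → ℝ) → ℝ} {g : (Fin k → ℝ) → (Fin n → ℝ) → ℝ}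
    {φ : (Fin k → ℝ) → (Fin n → ℝ)} (hφ : ContDiff ℝ ((1 : WithTop ℕ∞) + 1) φ) {x : Fin k → ℝ}
    (hX : ∀ i, DifferentiableAt ℝ (fun p : (Fin k → ℝ) × (Fin n → ℝ) => X i p.1 p.2) (x, φ x))
    (hg : DifferentiableAt ℝ (fun p : (Fin k → ℝ) × (Fin n → ℝ) => g p.1 p.2) (x, φ x))
    (α : Fin k) :
    HasDerivAt
      (fun t => g (Function.update x α t) (φ (Function.update x α t))
        - ∑ i, X i (Function.update x α t) (φ (Function.update x α t))
          * pdV L i α (j1 φ (Function.update x α t)))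
      (totalDeriv g α (j1 φ x) - ∑ i, (totalDeriv (X i) α (j1 φ x) * pdV L i α (j1 φ x)
        + X i x (φ x) * deriv (fun t => pdV L i α (j1 φ (Function.update x α t))) (x α)))
      (x α) := by
  have hφx : DifferentiableAt ℝ φ x := hφ.differentiable (by simp) x
  have hpdV : ∀ i, DifferentiableAt ℝ (fun t => pdV L i α (j1 φ (Function.update x α t))) (x α) :=
    fun i => (((contDiff_pdV hL i α).comp (contDiff_j1 hφ)).differentiable one_ne_zero _).comp _
      (hasDerivAt_update x α _).differentiableAt
  refine (hasDerivAt_comp_graph hg hφx α).sub (HasDerivAt.fun_sum fun i _ => ?_)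
  simpa using (hasDerivAt_comp_graph (hX i) hφx α).fun_mul (hpdV i).hasDerivAt

theorem statement6_general (k n : ℕ)
    (L : Jet k n → ℝ) (hL : ContDiff ℝ (⊤ : ℕ∞) L)
    (X : Fin n → (Fin k → ℝ) → (Fin n → ℝ) → ℝ)
    (hX : ∀ i, ContDiff ℝ (⊤ : ℕ∞)
      (fun p : (Fin k → ℝ) × (Fin n → ℝ) => X i p.1 p.2))
    (g : Fin k → (Fin k → ℝ) → (Fin n → ℝ) → ℝ)
    (hg : ∀ α, ContDiff ℝ (⊤ : ℕ∞)
      (fun p : (Fin k → ℝ) × (Fin n → ℝ) => g α p.1 p.2))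
    (hsym : ∀ z : Jet k n,
      (∑ i : Fin n, X i z.1 z.2.1 * pdQ L i z)
      + (∑ i : Fin n, ∑ α : Fin k,
          (pdEX (X i) α z.1 z.2.1
            + ∑ j : Fin n, z.2.2 j α * pdEQ (X i) j z.1 z.2.1) * pdV L i α z)
      = ∑ α : Fin k,
          (pdEX (g α) α z.1 z.2.1
            + ∑ i : Fin n, z.2.2 i α * pdEQ (g α) i z.1 z.2.1)) :
    IsConservationLaw L
      (fun α z => g α z.1 z.2.1 - ∑ i : Fin n, X i z.1 z.2.1 * pdV L i α z) := by
  rintro φ ⟨hφ, hEL⟩ x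
  have hφ2 : ContDiff ℝ ((1 : WithTop ℕ∞) + 1) φ := hφ.of_le (WithTop.coe_le_coe.2 le_top)
  have hL2 : ContDiff ℝ ((1 : WithTop ℕ∞) + 1) L := hL.of_le (WithTop.coe_le_coe.2 le_top)
  have hdG := fun α => hasDerivAt_sub_sum_mul_pdV hL2 hφ2
    (fun i => (hX i).differentiable (by simp) (x, φ x)) ((hg α).differentiable (by simp) _) α
  have hXEL : ∑ α, ∑ i, X i x (φ x) * deriv (fun t => pdV L i α (j1 φ (Function.update x α t))) (x α)
      = ∑ i, X i x (φ x) * pdQ L i (j1 φ x) := by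
    rw [Finset.sum_comm]
    simp only [← Finset.mul_sum, hEL]
  have hsym_j1 : ∑ i, X i x (φ x) * pdQ L i (j1 φ x)
      + ∑ i, ∑ α, totalDeriv (X i) α (j1 φ x) * pdV L i α (j1 φ x)
      = ∑ α, totalDeriv (g α) α (j1 φ x) := hsym (j1 φ x)
  refine (Finset.sum_congr rfl fun α _ => (hdG α).deriv).trans ?_
  simp only [Finset.sum_sub_distrib, Finset.sum_add_distrib, hXEL]
  rw [Finset.sum_comm] at hsym_j1
  linarith

/-- if the prolongation of the `π`-vertical vector field `X = Xⁱ ∂/∂qⁱ`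
on `E` satisfies `X¹(L) = d_{T⁽⁰⁾_α} gᵅ`, then `Gᵅ = gᵅ ∘ π₁₀ − Θᵅ_L(X¹)`, i.e.
`Gᵅ(x,q,v) = gᵅ(x,q) − Xⁱ(x,q)·∂L/∂vⁱ_α(x,q,v)`, defines a conservation law. -/
theorem statement6 (k n : ℕ) (hk : 1 ≤ k) (hn : 1 ≤ n)
    (L : Jet k n → ℝ) (hL : ContDiff ℝ (⊤ : ℕ∞) L)
    (X : Fin n → (Fin k → ℝ) → (Fin n → ℝ) → ℝ)
    (hX : ∀ i, ContDiff ℝ (⊤ : ℕ∞)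
      (fun p : (Fin k → ℝ) × (Fin n → ℝ) => X i p.1 p.2))
    (g : Fin k → (Fin k → ℝ) → (Fin n → ℝ) → ℝ)
    (hg : ∀ α, ContDiff ℝ (⊤ : ℕ∞)
      (fun p : (Fin k → ℝ) × (Fin n → ℝ) => g α p.1 p.2))
    (hsym : ∀ z : Jet k n,
      (∑ i : Fin n, X i z.1 z.2.1 * pdQ L i z)
      + (∑ i : Fin n, ∑ α : Fin k,
          (pdEX (X i) α z.1 z.2.1
            + ∑ j : Fin n, z.2.2 j α * pdEQ (X i) j z.1 z.2.1) * pdV L i α z)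
      = ∑ α : Fin k,
          (pdEX (g α) α z.1 z.2.1
            + ∑ i : Fin n, z.2.2 i α * pdEQ (g α) i z.1 z.2.1)) :
    IsConservationLaw L
      (fun α z => g α z.1 z.2.1 - ∑ i : Fin n, X i z.1 z.2.1 * pdV L i α z) :=
  statement6_general k n L hL X hX g hg hsym
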